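/- There exists an absolute constant c > 0 with the following property: for all D ≥ 1, all M > 0, all σ ∈ (0,1] with D·σ² ≤ 1, every f as in the context, every k ∈ {1,…,D}, and a random vector θ ∈ ℝ^D whose coordinates are independent and uniformly distributed on [−σ, σ], one has | E[ (∂_{θ_k} f(θ))² ] − (∂_{θ_k} f(0))² | ≤ c·M²·D·σ². In particular, E[ ‖∇f(θ)‖² ] ≥ (∂_{θ_k} f(0))² − c·M²·D·σ². -/

import Mathlib

open MeasureTheory

/-- The partial derivative `∂_{θ_k} f`. -/
noncomputable def partialDeriv {D : ℕ} (k : Fin D) (f : (Fin D → ℝ) → ℝ) :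
    (Fin D → ℝ) → ℝ :=
  fun θ => fderiv ℝ f θ (Pi.single k 1)

/-- The higher-order partial derivative `D^α = ∂_{θ_1}^{α_1} ⋯ ∂_{θ_D}^{α_D}`
associated with a multi-index `α ∈ ℕ^D`. -/
noncomputable def multiDeriv {D : ℕ} (α : Fin D → ℕ) (f : (Fin D → ℝ) → ℝ) :
    (Fin D → ℝ) → ℝ :=
  ((List.finRange D).flatMap (fun k => List.replicate (α k) k)).foldr partialDeriv f

/-- The law of a random vector `θ ∈ ℝ^D` with independent coordinates, each uniformly
distributed on `[−σ, σ]`. -/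
noncomputable def uniformCubeMeasure (D : ℕ) (σ : ℝ) : Measure (Fin D → ℝ) :=
  Measure.pi (fun _ : Fin D =>
    ENNReal.ofReal (1 / (2 * σ)) • volume.restrict (Set.Icc (-σ) σ))

lemma contDiff_partialDeriv {D : ℕ} {f : (Fin D → ℝ) → ℝ} (hf : ContDiff ℝ (⊤ : ℕ∞) f) (k : Fin D) :
    ContDiff ℝ (⊤ : ℕ∞) (partialDeriv k f) :=
  by
  have h := ((ContinuousLinearMap.apply ℝ ℝ (Pi.single k 1)
      : ((Fin D → ℝ) →L[ℝ] ℝ) →L[ℝ] ℝ).contDiff (n := (⊤ : ℕ∞))).comp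
      (hf.fderiv_right (m := (⊤ : ℕ∞)) (by simp))
  exact h

lemma contDiff_foldr {D : ℕ} (L : List (Fin D)) {f : (Fin D → ℝ) → ℝ} (hf : ContDiff ℝ (⊤ : ℕ∞) f) :
    ContDiff ℝ (⊤ : ℕ∞) (L.foldr partialDeriv f) := by
  induction L with
  | nil => exact hf
  | cons a l ih => exact contDiff_partialDeriv ih a

lemma pd_comm {D : ℕ} {f : (Fin D → ℝ) → ℝ} (hf : ContDiff ℝ (⊤ : ℕ∞) f) (a b : Fin D) :
    partialDeriv a (partialDeriv b f) = partialDeriv b (partialDeriv a f) := by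
  funext x
  have hd : ∀ y, HasFDerivAt f (fderiv ℝ f y) y :=
    fun y => (hf.differentiable (by simp) y).hasFDerivAt
  have hda : DifferentiableAt ℝ (fderiv ℝ f) x :=
    (hf.fderiv_right (m := (⊤ : ℕ∞)) (by simp)).differentiable (by simp) x
  have h2 : HasFDerivAt (fderiv ℝ f) (fderiv ℝ (fderiv ℝ f) x) x := hda.hasFDerivAt
  have hsymm := second_derivative_symmetric hd h2 (Pi.single a 1) (Pi.single b 1)
  have key : ∀ w : Fin D → ℝ, fderiv ℝ (fun y => fderiv ℝ f y w) x
      = (fderiv ℝ (fderiv ℝ f) x).flip w := by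
    intro w
    rw [fderiv_clm_apply hda (differentiableAt_const w)]
    simp
  show fderiv ℝ (fun y => fderiv ℝ f y (Pi.single b 1)) x (Pi.single a 1)
      = fderiv ℝ (fun y => fderiv ℝ f y (Pi.single a 1)) x (Pi.single b 1)
  rw [key, key]
  simpa using hsymm

lemma foldr_perm {D : ℕ} {L1 L2 : List (Fin D)} (h : L1.Perm L2) :
    ∀ f : (Fin D → ℝ) → ℝ, ContDiff ℝ (⊤ : ℕ∞) f →
      L1.foldr partialDeriv f = L2.foldr partialDeriv f := by
  induction h with
  | nil => intro f _; rfl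
  | cons a _ ih => intro f hf; simp only [List.foldr_cons, ih f hf]
  | swap a b l => intro f hf
                  simp only [List.foldr_cons]
                  exact pd_comm (contDiff_foldr l hf) b a
  | trans _ _ ih1 ih2 => intro f hf; rw [ih1 f hf, ih2 f hf]

lemma foldr_le_bound {D : ℕ} {f : (Fin D → ℝ) → ℝ} {M : ℝ} (hf : ContDiff ℝ (⊤ : ℕ∞) f)
    (hb : ∀ (α : Fin D → ℕ) (x : Fin D → ℝ), |multiDeriv α f x| ≤ M)
    (L : List (Fin D)) (x : Fin D → ℝ) : |L.foldr partialDeriv f x| ≤ M := by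
  have hperm : ((List.finRange D).flatMap fun m => List.replicate (L.count m) m).Perm L := by
    rw [List.perm_iff_count]
    intro a
    have h1 : ∀ l : List (Fin D),
        ((l.flatMap fun m => List.replicate (L.count m) m).count a)
          = (l.map fun m => if a = m then L.count m else 0).sum := by
      intro l
      induction l with
      | nil => simp
      | cons b l ih =>
        simp only [List.flatMap_cons, List.count_append, ih, List.count_replicate,
          List.map_cons, List.sum_cons]
        congr 1
        by_cases h : a = b
        · simp [h]
        · simp [h, Ne.symm h]
    rw [h1, ← Fin.sum_univ_def]
    simp
  have hmd := hb (fun m => L.count m) x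
  unfold multiDeriv at hmd
  rwa [foldr_perm hperm f hf] at hmd

lemma lemA {σ C : ℝ} (hσ : 0 < σ) (φ φ' φ'' : ℝ → ℝ)
    (h1 : ∀ t, HasDerivAt φ (φ' t) t) (h2 : ∀ t, HasDerivAt φ' (φ'' t) t)
    (hb : ∀ t, |φ'' t| ≤ C) :
    |(∫ t, φ t ∂(ENNReal.ofReal (1 / (2 * σ)) • volume.restrict (Set.Icc (-σ) σ))) - φ 0|
      ≤ C * σ ^ 2 := by
  set ν : Measure ℝ := ENNReal.ofReal (1 / (2 * σ)) • volume.restrict (Set.Icc (-σ) σ) with hν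
  have hC : 0 ≤ C := le_trans (abs_nonneg _) (hb 0)
  haveI hprob : IsProbabilityMeasure ν := by
    constructor
    rw [hν, Measure.smul_apply, Measure.restrict_apply_univ, Real.volume_Icc, smul_eq_mul,
      ← ENNReal.ofReal_mul (by positivity)]
    rw [show 1 / (2 * σ) * (σ - -σ) = 1 by field_simp; ring]
    exact ENNReal.ofReal_one
  have hφc : Continuous φ := by
    rw [continuous_iff_continuousAt]; exact fun t => (h1 t).continuousAt
  have hint : ∀ u : ℝ → ℝ, Continuous u → Integrable u ν := by
    intro u hu
    rw [hν]
    exact (hu.integrableOn_Icc).smul_measure ENNReal.ofReal_ne_top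
  have hmean : ∫ t, t ∂ν = 0 := by
    have h0 : ∫ t in Set.Ioc (-σ) σ, t = ∫ t in (-σ)..σ, t := by
      open intervalIntegral in rw [integral_of_le (by linarith : -σ ≤ σ)]
    rw [hν, integral_smul_measure, MeasureTheory.integral_Icc_eq_integral_Ioc, h0]
    open intervalIntegral in rw [integral_id]
    simp
  have hlip : ∀ t : ℝ, |φ' t - φ' 0| ≤ C * |t| := by
    intro t
    have := Convex.norm_image_sub_le_of_norm_hasDerivWithin_le
      (f := φ') (f' := φ'') (s := Set.univ) (C := C)
      (fun x _ => (h2 x).hasDerivWithinAt) (fun x _ => by simpa using hb x) convex_univ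
      (Set.mem_univ 0) (Set.mem_univ t)
    simpa using this
  have hkey : ∀ t ∈ Set.Icc (-σ) σ, |φ t - φ 0 - φ' 0 * t| ≤ C * σ ^ 2 := by
    intro t ht
    have habs : |t| ≤ σ := abs_le.mpr ⟨ht.1, ht.2⟩
    have hχ : ∀ x : ℝ, HasDerivAt (fun s => φ s - φ' 0 * s) (φ' x - φ' 0) x := by
      intro x
      have := (h1 x).sub ((hasDerivAt_id x).const_mul (φ' 0))
      simp only [mul_one] at this
      exact this
    have h0m : (0 : ℝ) ∈ Set.Icc (-σ) σ := by constructor <;> linarith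
    have := Convex.norm_image_sub_le_of_norm_hasDerivWithin_le
      (f := fun s => φ s - φ' 0 * s) (f' := fun s => φ' s - φ' 0) (s := Set.Icc (-σ) σ)
      (C := C * σ)
      (fun x _ => (hχ x).hasDerivWithinAt)
      (fun x hx => by
        have h3 : |x| ≤ σ := abs_le.mpr ⟨hx.1, hx.2⟩
        have := hlip x
        simp only [Real.norm_eq_abs]
        nlinarith)
      (convex_Icc _ _) h0m ht
    simp only [Real.norm_eq_abs, mul_zero, sub_zero] at this
    calc |φ t - φ 0 - φ' 0 * t| ≤ C * σ * |t| := by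
            have h4 : φ t - φ' 0 * t - φ 0 = φ t - φ 0 - φ' 0 * t := by ring
            rwa [h4] at this
      _ ≤ C * σ * σ :=
            mul_le_mul_of_nonneg_left habs (mul_nonneg hC hσ.le)
      _ = C * σ ^ 2 := by ring
  have i1 : Integrable φ ν := hint φ hφc
  have i3 : Integrable (fun t : ℝ => φ' 0 * t) ν :=
    hint _ (continuous_const.mul continuous_id)
  have i2 : Integrable (fun t : ℝ => φ 0 + φ' 0 * t) ν := (integrable_const _).add i3
  have heq : ∫ t, (φ t - (φ 0 + φ' 0 * t)) ∂ν = (∫ t, φ t ∂ν) - φ 0 := by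
    rw [integral_sub i1 i2, integral_add (integrable_const _) i3,
      integral_const, integral_const_mul, hmean]
    simp [measure_univ]
  rw [← heq]
  have hae : ∀ᵐ t ∂ν, ‖φ t - (φ 0 + φ' 0 * t)‖ ≤ C * σ ^ 2 := by
    rw [hν]
    refine Measure.ae_smul_measure ?_ _
    filter_upwards [ae_restrict_mem measurableSet_Icc] with t ht
    simpa [Real.norm_eq_abs, sub_add_eq_sub_sub] using hkey t ht
  have := norm_integral_le_of_norm_le_const (μ := ν) hae
  simpa [measure_univ, Real.norm_eq_abs] using this

lemma hasDerivAt_line {D : ℕ} {p : (Fin D → ℝ) → ℝ} (hp : ContDiff ℝ (⊤ : ℕ∞) p)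
    (c v : Fin D → ℝ) (t : ℝ) :
    HasDerivAt (fun s => p (c + s • v)) (fderiv ℝ p (c + t • v) v) t := by
  have h1 : HasDerivAt (fun s : ℝ => c + s • v) v t := by
    simpa using ((hasDerivAt_id t).smul_const v).const_add c
  exact ((hp.differentiable (by simp) _).hasFDerivAt).comp_hasDerivAt t h1

lemma lemD {D : ℕ} {σ M : ℝ} (hσ : 0 < σ) {f : (Fin D → ℝ) → ℝ} (hf : ContDiff ℝ (⊤ : ℕ∞) f)
    (hb : ∀ (α : Fin D → ℕ) (x : Fin D → ℝ), |multiDeriv α f x| ≤ M) (k i : Fin D)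
    (c : Fin D → ℝ) :
    |(∫ t, (partialDeriv k f (c + t • (Pi.single i 1 : Fin D → ℝ))) ^ 2
        ∂(ENNReal.ofReal (1 / (2 * σ)) • volume.restrict (Set.Icc (-σ) σ)))
      - (partialDeriv k f c) ^ 2| ≤ (4 * M ^ 2) * σ ^ 2 := by
  set p := partialDeriv k f with hp_def
  set p1 := partialDeriv i p with hp1_def
  set p2 := partialDeriv i p1 with hp2_def
  have hp : ContDiff ℝ (⊤ : ℕ∞) p := contDiff_partialDeriv hf k
  have hp1 : ContDiff ℝ (⊤ : ℕ∞) p1 := contDiff_partialDeriv hp i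
  have bp : ∀ x, |p x| ≤ M := foldr_le_bound hf hb [k]
  have bp1 : ∀ x, |p1 x| ≤ M := foldr_le_bound hf hb [i, k]
  have bp2 : ∀ x, |p2 x| ≤ M := foldr_le_bound hf hb [i, i, k]
  have hM0 : 0 ≤ M := le_trans (abs_nonneg _) (bp c)
  set v : Fin D → ℝ := Pi.single i 1 with hv
  set x : ℝ → (Fin D → ℝ) := fun t => c + t • v with hx
  have hψ : ∀ t, HasDerivAt (fun s => p (x s)) (p1 (x t)) t :=
    fun t => hasDerivAt_line hp c v t
  have hψ1 : ∀ t, HasDerivAt (fun s => p1 (x s)) (p2 (x t)) t :=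
    fun t => hasDerivAt_line hp1 c v t
  have h1 : ∀ t, HasDerivAt (fun s => p (x s) ^ 2) (2 * p (x t) * p1 (x t)) t := by
    intro t
    have h := (hψ t).pow 2
    norm_num at h
    exact h
  have h2 : ∀ t, HasDerivAt (fun s => 2 * p (x s) * p1 (x s))
      (2 * p1 (x t) * p1 (x t) + 2 * p (x t) * p2 (x t)) t := by
    intro t
    exact ((hψ t).const_mul 2).mul (hψ1 t)
  have hbb : ∀ t, |2 * p1 (x t) * p1 (x t) + 2 * p (x t) * p2 (x t)| ≤ 4 * M ^ 2 := by
    intro t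
    have a1 := bp (x t); have a2 := bp1 (x t); have a3 := bp2 (x t)
    have n1 := abs_nonneg (p (x t)); have n2 := abs_nonneg (p1 (x t))
    have n3 := abs_nonneg (p2 (x t))
    have habs := abs_add_le (2 * p1 (x t) * p1 (x t)) (2 * p (x t) * p2 (x t))
    have e1 : |2 * p1 (x t) * p1 (x t)| = 2 * |p1 (x t)| * |p1 (x t)| := by
      rw [abs_mul, abs_mul, abs_two]
    have e2 : |2 * p (x t) * p2 (x t)| = 2 * |p (x t)| * |p2 (x t)| := by
      rw [abs_mul, abs_mul, abs_two]
    nlinarith [mul_le_mul a2 a2 n2 hM0, mul_le_mul a1 a3 n3 hM0]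
  have main := lemA hσ (fun t => p (x t) ^ 2) (fun t => 2 * p (x t) * p1 (x t))
    (fun t => 2 * p1 (x t) * p1 (x t) + 2 * p (x t) * p2 (x t)) h1 h2 hbb
  have hx0 : c + (0 : ℝ) • v = c := by simp
  simpa [hx, hx0] using main

/-- There is an absolute constant `c > 0` such that for all `D ≥ 1`,
`M > 0`, `σ ∈ (0,1]` with `D·σ² ≤ 1`, every smooth `f` with all iterated partial derivatives
bounded by `M`, every `k`, and `θ` with i.i.d. coordinates uniform on `[−σ,σ]`:
`|E[(∂_k f(θ))²] − (∂_k f(0))²| ≤ c·M²·D·σ²`, and in particular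
`E[‖∇f(θ)‖²] ≥ (∂_k f(0))² − c·M²·D·σ²`. -/
theorem stmt12 :
    ∃ c : ℝ, 0 < c ∧
      ∀ (D : ℕ), 1 ≤ D → ∀ M : ℝ, 0 < M → ∀ σ : ℝ, 0 < σ → σ ≤ 1 →
        (D : ℝ) * σ ^ 2 ≤ 1 →
        ∀ f : (Fin D → ℝ) → ℝ, ContDiff ℝ (⊤ : ℕ∞) f →
        (∀ (α : Fin D → ℕ) (x : Fin D → ℝ), |multiDeriv α f x| ≤ M) →
        ∀ k : Fin D,
        |(∫ θ, (partialDeriv k f θ) ^ 2 ∂(uniformCubeMeasure D σ)) -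
            (partialDeriv k f 0) ^ 2| ≤ c * M ^ 2 * (D : ℝ) * σ ^ 2 ∧
        (∫ θ, (∑ j, (partialDeriv j f θ) ^ 2) ∂(uniformCubeMeasure D σ)) ≥
          (partialDeriv k f 0) ^ 2 - c * M ^ 2 * (D : ℝ) * σ ^ 2 := by
  refine ⟨4, by norm_num, ?_⟩
  intro D hD M hM σ hσ hσ1 hDσ f hf hb k
  obtain ⟨n, rfl⟩ : ∃ n, D = n + 1 := ⟨D - 1, by omega⟩
  set ν : Measure ℝ := ENNReal.ofReal (1 / (2 * σ)) • volume.restrict (Set.Icc (-σ) σ) with hν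
  haveI hprobν : IsProbabilityMeasure ν := by
    constructor
    rw [hν, Measure.smul_apply, Measure.restrict_apply_univ, Real.volume_Icc, smul_eq_mul,
      ← ENNReal.ofReal_mul (by positivity)]
    rw [show 1 / (2 * σ) * (σ - -σ) = 1 by field_simp; ring]
    exact ENNReal.ofReal_one
  set μ : Measure (Fin (n + 1) → ℝ) := uniformCubeMeasure (n + 1) σ with hμ
  have hμeq : μ = Measure.pi (fun _ : Fin (n + 1) => ν) := rfl
  haveI : IsProbabilityMeasure μ := by rw [hμeq]; infer_instance
  set g : (Fin (n + 1) → ℝ) → ℝ := fun θ => partialDeriv k f θ ^ 2 with hg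
  have hgc : Continuous g := ((contDiff_partialDeriv hf k).continuous).pow 2
  have hM0 : 0 ≤ M := le_trans (abs_nonneg _) (foldr_le_bound hf hb [k] 0)
  have hgb : ∀ θ, |g θ| ≤ M ^ 2 := by
    intro θ
    have h := foldr_le_bound hf hb [k] θ
    have h2 : |g θ| = |partialDeriv k f θ| ^ 2 := by rw [hg]; exact abs_pow _ 2
    rw [h2]
    exact pow_le_pow_left₀ (abs_nonneg _) h 2
  have hintμ : ∀ (u : (Fin (n + 1) → ℝ) → ℝ) (B : ℝ), Continuous u → (∀ θ, |u θ| ≤ B) →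
      Integrable u μ := by
    intro u B hu hB
    exact ⟨hu.aestronglyMeasurable,
      HasFiniteIntegral.of_bounded (C := B)
        (ae_of_all _ (fun θ => by simpa [Real.norm_eq_abs] using hB θ))⟩
  set T : ℕ → (Fin (n + 1) → ℝ) → (Fin (n + 1) → ℝ) :=
    fun m θ j => if (j : ℕ) < m then θ j else 0 with hT
  have hTc : ∀ m, Continuous (T m) := by
    intro m
    refine continuous_pi fun j => ?_
    by_cases h : (j : ℕ) < m
    · simpa [hT, h] using continuous_apply j
    · simpa [hT, h] using continuous_const
  have hTD : T (n + 1) = id := by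
    funext θ j; simp [hT, j.isLt]
  have hT0 : ∀ θ, T 0 θ = 0 := by
    intro θ; funext j; simp [hT]
  have hint_gT : ∀ m, Integrable (fun θ => g (T m θ)) μ :=
    fun m => hintμ _ (M ^ 2) (hgc.comp (hTc m)) (fun θ => hgb _)
  have step : ∀ m : ℕ, m < n + 1 →
      |(∫ θ, g (T (m + 1) θ) ∂μ) - ∫ θ, g (T m θ) ∂μ| ≤ (4 * M ^ 2) * σ ^ 2 := by
    intro m hm
    set i : Fin (n + 1) := ⟨m, hm⟩ with hi
    set e := MeasurableEquiv.piFinSuccAbove (fun _ : Fin (n + 1) => ℝ) i with he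
    have mp := measurePreserving_piFinSuccAbove (fun _ : Fin (n + 1) => ν) i
    set ρ : Measure (Fin n → ℝ) := Measure.pi (fun _ : Fin n => ν) with hρ
    haveI : IsProbabilityMeasure ρ := by rw [hρ]; infer_instance
    set F : (Fin (n + 1) → ℝ) → ℝ := fun θ => g (T (m + 1) θ) - g (T m θ) with hF
    have hFc : Continuous F := (hgc.comp (hTc (m + 1))).sub (hgc.comp (hTc m))
    have hFb : ∀ θ, |F θ| ≤ 2 * M ^ 2 := by
      intro θ
      calc |F θ| ≤ |g (T (m + 1) θ)| + |g (T m θ)| := abs_sub _ _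
        _ ≤ 2 * M ^ 2 := by
            have h1 := hgb (T (m + 1) θ); have h2 := hgb (T m θ); linarith
    have hsymm : ∀ z : ℝ × (Fin n → ℝ), e.symm z = i.insertNth z.1 z.2 := fun z => rfl
    have hvi : (i : ℕ) = m := rfl
    have hA : ∀ (t : ℝ) (r : Fin n → ℝ),
        T (m + 1) (i.insertNth t r)
          = T (m + 1) (i.insertNth 0 r) + t • (Pi.single i 1 : Fin (n + 1) → ℝ) := by
      intro t r
      funext j
      rcases eq_or_ne j i with rfl | hne
      · simp [hT, Fin.insertNth_apply_same, hvi]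
      · obtain ⟨l, rfl⟩ := Fin.exists_succAbove_eq hne
        simp [hT, Fin.insertNth_apply_succAbove, Pi.single_eq_of_ne (Fin.succAbove_ne i l)]
    have hB : ∀ (t : ℝ) (r : Fin n → ℝ),
        T m (i.insertNth t r) = T (m + 1) (i.insertNth 0 r) := by
      intro t r
      funext j
      rcases eq_or_ne j i with rfl | hne
      · simp [hT, Fin.insertNth_apply_same, hvi]
      · obtain ⟨l, rfl⟩ := Fin.exists_succAbove_eq hne
        have hv : ((i.succAbove l : Fin (n + 1)) : ℕ) ≠ m := by
          intro h
          exact (Fin.succAbove_ne i l) (Fin.val_injective (h.trans hvi.symm))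
        have hiff : ((i.succAbove l : Fin (n + 1)) : ℕ) < m ↔
            ((i.succAbove l : Fin (n + 1)) : ℕ) < m + 1 := by omega
        simp only [hT, Fin.insertNth_apply_succAbove]
        exact if_congr hiff rfl rfl
    have hcomp : (∫ θ, F θ ∂μ) = ∫ z, F (e.symm z) ∂(ν.prod ρ) := by
      rw [hμeq]
      have h := mp.integral_comp e.measurableEmbedding (fun z => F (e.symm z))
      refine Eq.trans ?_ h
      congr 1
      funext θ
      exact congrArg F (e.symm_apply_apply θ).symm
    have hIntG : Integrable (fun z => F (e.symm z)) (ν.prod ρ) :=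
      ⟨(hFc.measurable.comp e.symm.measurable).aestronglyMeasurable,
        HasFiniteIntegral.of_bounded (C := 2 * M ^ 2)
          (ae_of_all _ fun z => by simpa [Real.norm_eq_abs] using hFb _)⟩
    have hinner : ∀ r : Fin n → ℝ, |∫ t, F (e.symm (t, r)) ∂ν| ≤ (4 * M ^ 2) * σ ^ 2 := by
      intro r
      set cR : Fin (n + 1) → ℝ := T (m + 1) (i.insertNth 0 r) with hcR
      have hre : (fun t : ℝ => F (e.symm (t, r)))
          = fun t => g (cR + t • (Pi.single i 1 : Fin (n + 1) → ℝ)) - g cR := by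
        funext t
        rw [hsymm (t, r)]
        simp only [hF]
        rw [hA t r, hB t r]
      rw [hre]
      have hint1 : Integrable (fun t : ℝ => g (cR + t • (Pi.single i 1 : Fin (n + 1) → ℝ))) ν := by
        have hxc : Continuous fun t : ℝ => cR + t • (Pi.single i 1 : Fin (n + 1) → ℝ) := by
          fun_prop
        refine ⟨(hgc.comp hxc).aestronglyMeasurable, ?_⟩
        exact HasFiniteIntegral.of_bounded (C := M ^ 2)
          (ae_of_all _ fun t => by simpa [Real.norm_eq_abs] using hgb _)
      rw [integral_sub hint1 (integrable_const _), integral_const, probReal_univ]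
      simp only [ENNReal.toReal_one, one_smul, smul_eq_mul, one_mul]
      exact lemD hσ hf hb k i cR
    have hstep2 : ∫ z, F (e.symm z) ∂(ν.prod ρ) = ∫ r, ∫ t, F (e.symm (t, r)) ∂ν ∂ρ :=
      integral_prod_symm _ hIntG
    rw [← integral_sub (hint_gT (m + 1)) (hint_gT m)]
    have hFeq : (fun θ => g (T (m + 1) θ) - g (T m θ)) = F := rfl
    rw [hFeq, hcomp, hstep2]
    have hb2 : ∀ᵐ (r : Fin n → ℝ) ∂ρ, ‖∫ t, F (e.symm (t, r)) ∂ν‖ ≤ (4 * M ^ 2) * σ ^ 2 :=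
      ae_of_all _ fun r => by rw [Real.norm_eq_abs]; exact hinner r
    have h5 := norm_integral_le_of_norm_le_const hb2
    rw [probReal_univ, mul_one, Real.norm_eq_abs] at h5
    exact h5
  have tele : (∫ θ, g θ ∂μ) - g 0
      = ∑ m ∈ Finset.range (n + 1), ((∫ θ, g (T (m + 1) θ) ∂μ) - ∫ θ, g (T m θ) ∂μ) := by
    rw [Finset.sum_range_sub (f := fun m => ∫ θ, g (T m θ) ∂μ)]
    congr 1
    · rw [hTD]; simp only [id_eq]
    · have h0 : ∀ θ, g (T 0 θ) = g 0 := fun θ => by rw [hT0]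
      rw [show (∫ θ, g (T 0 θ) ∂μ) = ∫ _θ, g 0 ∂μ from by simp only [h0],
        integral_const, probReal_univ, one_smul]
  have key : |(∫ θ, g θ ∂μ) - g 0| ≤ ((n : ℝ) + 1) * ((4 * M ^ 2) * σ ^ 2) := by
    rw [tele]
    calc |∑ m ∈ Finset.range (n + 1), ((∫ θ, g (T (m + 1) θ) ∂μ) - ∫ θ, g (T m θ) ∂μ)|
        ≤ ∑ m ∈ Finset.range (n + 1),
            |(∫ θ, g (T (m + 1) θ) ∂μ) - ∫ θ, g (T m θ) ∂μ| := Finset.abs_sum_le_sum_abs _ _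
      _ ≤ ∑ _m ∈ Finset.range (n + 1), (4 * M ^ 2) * σ ^ 2 :=
          Finset.sum_le_sum fun m hm => step m (Finset.mem_range.mp hm)
      _ = ((n : ℝ) + 1) * ((4 * M ^ 2) * σ ^ 2) := by
          rw [Finset.sum_const, Finset.card_range]
          push_cast [nsmul_eq_mul]
          ring
  have hcast : ((n : ℝ) + 1) * ((4 * M ^ 2) * σ ^ 2) = 4 * M ^ 2 * ((n + 1 : ℕ) : ℝ) * σ ^ 2 := by
    push_cast; ring
  rw [hcast] at key
  constructor
  · exact key
  · have hintj : ∀ j : Fin (n + 1), Integrable (fun θ => partialDeriv j f θ ^ 2) μ := by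
      intro j
      refine hintμ _ (M ^ 2) (((contDiff_partialDeriv hf j).continuous).pow 2) fun θ => ?_
      have h := foldr_le_bound hf hb [j] θ
      calc |partialDeriv j f θ ^ 2| = |partialDeriv j f θ| ^ 2 := abs_pow _ 2
        _ ≤ M ^ 2 := pow_le_pow_left₀ (abs_nonneg _) h 2
    have hsum : (∫ θ, (∑ j, (partialDeriv j f θ) ^ 2) ∂μ)
        = ∑ j, ∫ θ, (partialDeriv j f θ) ^ 2 ∂μ :=
      integral_finset_sum Finset.univ fun j _ => hintj j
    have hle : (∫ θ, g θ ∂μ) ≤ ∑ j, ∫ θ, (partialDeriv j f θ) ^ 2 ∂μ := by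
      refine Finset.single_le_sum (f := fun j => ∫ θ, (partialDeriv j f θ) ^ 2 ∂μ)
        (fun j _ => integral_nonneg fun θ => sq_nonneg _) (Finset.mem_univ k)
    have habs := abs_le.mp key
    rw [ge_iff_le, hsum]
    have : g 0 = (partialDeriv k f 0) ^ 2 := rfl
    linarith [habs.1, hle]
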